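/- Path-count estimate (Lemma 2.1): There is a constant K (depending only on d) such that for all z ∈ ℤ^d and all integers n > |z|: η(n,z) − η(z) ≤ (n − |z|)·log(2den/(n − |z|)) + K, where e is Euler's number. (For n = |z| one trivially has η(n,z) − η(z) = 0.) -/

import Mathlib

open MeasureTheory Filter Topology ProbabilityTheory

namespace PAM

/-- ℓ¹ norm of a lattice point, as a natural number. -/
def normZ {d : ℕ} (z : Fin d → ℤ) : ℕ := ∑ i, (z i).natAbs

/-- ℓ¹ norm of a lattice point, as a real number. -/
noncomputable def norm1 {d : ℕ} (z : Fin d → ℤ) : ℝ := normZ z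

/-- ℓ¹ norm on `ℝ^d`. -/
noncomputable def norm1R {d : ℕ} (x : Fin d → ℝ) : ℝ := ∑ i, |x i|

/-- The set of nearest-neighbour lattice paths of length `n` starting at the origin and
passing through `z`. -/
def pathsThrough (d n : ℕ) (z : Fin d → ℤ) : Set (Fin (n + 1) → Fin d → ℤ) :=
  {y | y 0 = 0 ∧ (∀ i : Fin n, normZ (y i.succ - y i.castSucc) = 1) ∧ ∃ i, y i = z}

/-- `N(n,z)`: the number of nearest-neighbour lattice paths of length `n` starting at the
origin and passing through `z`. -/
noncomputable def Npath (d n : ℕ) (z : Fin d → ℤ) : ℕ := (pathsThrough d n z).ncard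

/-- `η(n,z) = log N(n,z)`. -/
noncomputable def etaN (d n : ℕ) (z : Fin d → ℤ) : ℝ := Real.log (Npath d n z)

/-- `η(z) = log N(z)` where `N(z) = N(|z|,z)`. -/
noncomputable def eta {d : ℕ} (z : Fin d → ℤ) : ℝ := etaN d (normZ z) z

/-- The functional `Φ_t` associated with the potential `ξ`. -/
noncomputable def Phi {d : ℕ} (ξ : (Fin d → ℤ) → ℝ) (t : ℝ) (z : Fin d → ℤ) : ℝ :=
  if norm1 z ≤ t * ξ z then ξ z - norm1 z / t * Real.log (ξ z) + eta z / t else 0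

/-- The discrete Laplacian on `ℤ^d`. -/
noncomputable def lap {d : ℕ} (f : (Fin d → ℤ) → ℝ) (z : Fin d → ℤ) : ℝ :=
  ∑ i : Fin d, ((f (z + fun j => if j = i then 1 else 0) - f z)
              + (f (z - fun j => if j = i then 1 else 0) - f z))

/-- `X` is Pareto(α)-distributed under `P`. -/
def IsPareto {Ω : Type*} [MeasurableSpace Ω] (P : Measure Ω) (α : ℝ) (X : Ω → ℝ) : Prop :=
  (∀ x : ℝ, 1 ≤ x → P {ω | X ω ≤ x} = ENNReal.ofReal (1 - x ^ (-α))) ∧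
  ∀ x : ℝ, x < 1 → P {ω | X ω ≤ x} = 0

/-- `u` is a nonnegative solution of the parabolic Anderson problem with potential `ξ` and
localized initial condition, whose total mass is finite at all times. -/
structure IsPAMSolution {d : ℕ} (ξ : (Fin d → ℤ) → ℝ) (u : ℝ → (Fin d → ℤ) → ℝ) : Prop where
  nonneg : ∀ t, 0 < t → ∀ z, 0 ≤ u t z
  pde : ∀ z, ∀ t, 0 < t → HasDerivAt (fun s => u s z) (lap (u t) z + ξ z * u t z) t
  init : ∀ z : Fin d → ℤ,
    Tendsto (fun t => u t z) (nhdsWithin 0 (Set.Ioi 0)) (nhds (if z = 0 then 1 else 0))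
  summable : ∀ t, 0 < t → Summable fun z => u t z

/-- The total mass `U(t)` of a solution. -/
noncomputable def totalMass {d : ℕ} (u : ℝ → (Fin d → ℤ) → ℝ) (t : ℝ) : ℝ := ∑' z, u t z

/-- The `i`-th largest value of the potential `ξ` in the centred ℓ¹-ball of radius `r`. -/
noncomputable def orderStat {d : ℕ} (ξ : (Fin d → ℤ) → ℝ) (r : ℝ) (i : ℕ) : ℝ :=
  sSup {y : ℝ | i ≤ Set.ncard {z : Fin d → ℤ | norm1 z ≤ r ∧ y ≤ ξ z}}

/-- `q = d/(α−d)`. -/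
noncomputable def qex (d : ℕ) (α : ℝ) : ℝ := d / (α - d)

/-- `r_t = (t / log t)^{q+1}`. -/
noncomputable def rt (d : ℕ) (α : ℝ) (t : ℝ) : ℝ := (t / Real.log t) ^ (qex d α + 1)

/-- `a_t = (t / log t)^{q}`. -/
noncomputable def amt (d : ℕ) (α : ℝ) (t : ℝ) : ℝ := (t / Real.log t) ^ qex d α

/-- The Euler Beta function. -/
noncomputable def betaFn (a b : ℝ) : ℝ := Real.Gamma a * Real.Gamma b / Real.Gamma (a + b)

/-- `θ = 2^d B(α−d,d) / (q^d (d−1)!)`. -/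
noncomputable def theta (d : ℕ) (α : ℝ) : ℝ :=
  2 ^ d * betaFn (α - d) d / (qex d α ^ d * (Nat.factorial (d - 1) : ℝ))

variable {d : ℕ}

lemma normZ_eq_zero_iff {v : Fin d → ℤ} : normZ v = 0 ↔ v = 0 := by
  unfold normZ
  rw [Finset.sum_eq_zero_iff]
  constructor
  · intro h; funext j
    simpa [Int.natAbs_eq_zero] using h j (Finset.mem_univ j)
  · rintro rfl j _; simp

lemma unit_struct {v : Fin d → ℤ} (h : normZ v = 1) :
    ∃ j : Fin d, (v j = 1 ∨ v j = -1) ∧ ∀ j', j' ≠ j → v j' = 0 := by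
  unfold normZ at h
  have h0 : ∃ j : Fin d, (v j).natAbs ≠ 0 := by
    by_contra hc
    push_neg at hc
    rw [Finset.sum_eq_zero (fun j _ => hc j)] at h
    omega
  obtain ⟨j, hj⟩ := h0
  refine ⟨j, ?_, ?_⟩
  · have h1 : (v j).natAbs ≤ 1 := by
      calc (v j).natAbs ≤ ∑ i, (v i).natAbs :=
        Finset.single_le_sum (f := fun i => (v i).natAbs) (fun i _ => Nat.zero_le _) (Finset.mem_univ j)
      _ = 1 := h
    have : (v j).natAbs = 1 := by omega
    rcases Int.natAbs_eq (v j) with h2 | h2 <;> rw [this] at h2 <;> simp [h2]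
  · intro j' hj'
    have hsplit := Finset.add_sum_erase Finset.univ (fun i => (v i).natAbs) (Finset.mem_univ j)
    rw [← hsplit] at h
    have h1 : 1 ≤ (v j).natAbs := by omega
    have h2 : ∑ i ∈ Finset.univ.erase j, (v i).natAbs = 0 := by omega
    rw [Finset.sum_eq_zero_iff] at h2
    have := h2 j' (Finset.mem_erase.mpr ⟨hj', Finset.mem_univ _⟩)
    omega

lemma unit_ne_zero {v : Fin d → ℤ} (h : normZ v = 1) : v ≠ 0 := by
  intro hv; rw [hv] at h; rw [show normZ (0 : Fin d → ℤ) = 0 from normZ_eq_zero_iff.mpr rfl] at h; omega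

lemma unit_abs_le {v : Fin d → ℤ} (h : normZ v = 1) (j : Fin d) : (v j).natAbs ≤ 1 := by
  calc (v j).natAbs ≤ ∑ i, (v i).natAbs :=
        Finset.single_le_sum (f := fun i => (v i).natAbs) (fun i _ => Nat.zero_le _) (Finset.mem_univ j)
    _ = 1 := h

lemma unit_eq_of_two_ne_zero {v : Fin d → ℤ} (h : normZ v = 1) {j j' : Fin d}
    (hj : v j ≠ 0) (hj' : v j' ≠ 0) : j = j' := by
  obtain ⟨j0, _, hz⟩ := unit_struct h
  by_contra hne
  rcases eq_or_ne j j0 with rfl | hj0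
  · exact hj' (hz j' (by tauto))
  · exact hj (hz j hj0)

/-- decode a (coordinate, sign) pair into a unit vector -/
def dec (j : Fin d) (b : Bool) : Fin d → ℤ := fun j' => if j' = j then (if b then 1 else -1) else 0

lemma unit_eq_dec {v : Fin d → ℤ} (h : normZ v = 1) : ∃ j b, v = dec j b := by
  obtain ⟨j, h1, h2⟩ := unit_struct h
  rcases h1 with h1 | h1
  · refine ⟨j, true, ?_⟩
    funext j'
    by_cases hj : j' = j
    · subst hj; simp [dec, h1]
    · simp [dec, hj, h2 j' hj]
  · refine ⟨j, false, ?_⟩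
    funext j'
    by_cases hj : j' = j
    · subst hj; simp [dec, h1]
    · simp [dec, hj, h2 j' hj]

noncomputable def encStep (hd : 0 < d) (v : Fin d → ℤ) : Fin d × Bool :=
  if h : ∃ j b, v = dec j b then (h.choose, h.choose_spec.choose) else (⟨0, hd⟩, true)

lemma dec_encStep (hd : 0 < d) {v : Fin d → ℤ} (h : normZ v = 1) :
    dec (encStep hd v).1 (encStep hd v).2 = v := by
  have he := unit_eq_dec h
  rw [encStep, dif_pos he]
  exact (he.choose_spec.choose_spec).symm

def stepsOf {d n : ℕ} (y : Fin (n + 1) → Fin d → ℤ) (i : Fin n) : Fin d → ℤ :=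
  y i.succ - y i.castSucc

lemma partial_sum {n : ℕ} {y : Fin (n + 1) → Fin d → ℤ} (h0 : y 0 = 0) (t : Fin (n + 1)) :
    y t = ∑ i ∈ Finset.univ.filter (fun i : Fin n => (i : ℕ) < (t : ℕ)), stepsOf y i := by
  obtain ⟨tv, ht⟩ := t
  induction tv with
  | zero =>
    have : Finset.univ.filter (fun i : Fin n => (i : ℕ) < 0) = ∅ := by
      ext i; simp
    simpa [this] using h0
  | succ tv ih =>
    have htv : tv < n := by omega
    have hle : tv < n + 1 := by omega
    have hfil : Finset.univ.filter (fun i : Fin n => (i : ℕ) < tv + 1)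
        = insert (⟨tv, htv⟩ : Fin n) (Finset.univ.filter (fun i : Fin n => (i : ℕ) < tv)) := by
      ext i
      simp only [Finset.mem_filter, Finset.mem_insert, Finset.mem_univ, true_and]
      constructor
      · intro h
        rcases Nat.lt_succ_iff_lt_or_eq.mp h with h | h
        · exact Or.inr h
        · exact Or.inl (Fin.ext h)
      · rintro (rfl | h)
        · simp
        · omega
    rw [hfil, Finset.sum_insert (by simp)]
    rw [← ih hle]
    have hs : stepsOf y ⟨tv, htv⟩ = y ⟨tv + 1, ht⟩ - y ⟨tv, hle⟩ := by
      simp [stepsOf, Fin.succ, Fin.castSucc, Fin.castAdd, Fin.castLE]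
    rw [hs]
    abel

lemma path_eq_of_steps_eq {n : ℕ} {y y' : Fin (n + 1) → Fin d → ℤ} (h0 : y 0 = 0)
    (h0' : y' 0 = 0) (hs : stepsOf y = stepsOf y') : y = y' := by
  funext t
  rw [partial_sum h0 t, partial_sum h0' t, hs]

lemma pathsThrough_finite (hd : 0 < d) {n : ℕ} (z : Fin d → ℤ) :
    (pathsThrough d n z).Finite := by
  classical
  apply Set.Finite.of_finite_image (f := fun y => fun i : Fin n => encStep hd (stepsOf y i))
  · exact Set.toFinite _
  · intro y hy y' hy' h
    apply path_eq_of_steps_eq hy.1 hy'.1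
    funext i
    have h1 : dec (encStep hd (stepsOf y i)).1 (encStep hd (stepsOf y i)).2 = stepsOf y i :=
      dec_encStep hd (hy.2.1 i)
    have h2 : dec (encStep hd (stepsOf y' i)).1 (encStep hd (stepsOf y' i)).2 = stepsOf y' i :=
      dec_encStep hd (hy'.2.1 i)
    rw [← h1, ← h2]
    have := congrFun h i
    simp only at this
    rw [this]

lemma normZ_dec (j : Fin d) (b : Bool) : normZ (dec j b) = 1 := by
  unfold normZ dec
  rw [Finset.sum_eq_single j]
  · cases b <;> simp
  · intro j' _ hne; simp [hne]
  · intro h; exact absurd (Finset.mem_univ j) h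

lemma exists_shortest_aux : ∀ (m : ℕ) (z : Fin d → ℤ), normZ z = m →
    ∃ y : Fin (m + 1) → Fin d → ℤ, y 0 = 0 ∧ (∀ i : Fin m, normZ (stepsOf y i) = 1) ∧
      y (Fin.last m) = z := by
  intro m
  induction m with
  | zero =>
    intro z hz
    have hz0 : z = 0 := normZ_eq_zero_iff.mp hz
    exact ⟨fun _ => 0, rfl, fun i => i.elim0, by simp [hz0, Fin.last]⟩
  | succ m ih =>
    intro z hz
    have h0 : ∃ j : Fin d, (z j).natAbs ≠ 0 := by
      by_contra hc
      push_neg at hc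
      have : normZ z = 0 := Finset.sum_eq_zero (fun j _ => hc j)
      omega
    obtain ⟨j, hj⟩ := h0
    set b : Bool := decide (0 < z j) with hb
    set z' : Fin d → ℤ := z - dec j b with hz'
    have hdecj : dec j b j = if b then 1 else -1 := by simp [dec]
    have hjne : z j ≠ 0 := fun h => hj (by simp [h])
    have hz'j : (z' j).natAbs = (z j).natAbs - 1 := by
      rcases lt_trichotomy (z j) 0 with h | h | h
      · have hbf : b = false := by rw [hb, decide_eq_false_iff_not]; omega
        have hvm : z' j = z j + 1 := by
          simp [hz', dec, hbf]
        rw [hvm]; omega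
      · exact absurd h hjne
      · have hbt : b = true := by rw [hb, decide_eq_true_eq]; omega
        have hvm : z' j = z j - 1 := by
          simp [hz', dec, hbt]
        rw [hvm]; omega
    have hz'o : ∀ j', j' ≠ j → z' j' = z j' := by
      intro j' hne
      simp [hz', dec, hne]
    have hnz' : normZ z' = m := by
      have h1 : normZ z' = ∑ i, (z' i).natAbs := rfl
      rw [h1, ← Finset.add_sum_erase Finset.univ (fun i => (z' i).natAbs) (Finset.mem_univ j)]
      have he : ∑ i ∈ Finset.univ.erase j, (z' i).natAbs
          = ∑ i ∈ Finset.univ.erase j, (z i).natAbs := by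
        apply Finset.sum_congr rfl
        intro i hi
        rw [hz'o i (Finset.mem_erase.mp hi).1]
      rw [he]
      have hzz : normZ z = (z j).natAbs + ∑ i ∈ Finset.univ.erase j, (z i).natAbs :=
        (Finset.add_sum_erase Finset.univ (fun i => (z i).natAbs) (Finset.mem_univ j)).symm
      omega
    obtain ⟨w, hw0, hws, hwl⟩ := ih z' hnz'
    refine ⟨Fin.snoc w z, ?_, ?_, ?_⟩
    · rw [show (0 : Fin (m + 1 + 1)) = Fin.castSucc 0 from rfl, Fin.snoc_castSucc]
      exact hw0
    · intro i
      rcases eq_or_ne i (Fin.last m) with rfl | hi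
      · have h1 : (Fin.last m).succ = Fin.last (m + 1) := rfl
        rw [stepsOf, h1, Fin.snoc_last, Fin.snoc_castSucc, hwl]
        have : z - z' = dec j b := by rw [hz']; abel
        rw [this]
        exact normZ_dec j b
      · obtain ⟨i', rfl⟩ := Fin.exists_castSucc_eq.mpr hi
        rw [stepsOf, Fin.succ_castSucc, Fin.snoc_castSucc]
        have h2 : (Fin.castSucc i').castSucc = Fin.castSucc (Fin.castSucc i') := rfl
        rw [h2, Fin.snoc_castSucc]
        exact hws i'
    · exact Fin.snoc_last _ _

lemma exists_shortest (z : Fin d → ℤ) :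
    ∃ y, y ∈ pathsThrough d (normZ z) z ∧ y (Fin.last (normZ z)) = z := by
  obtain ⟨y, h0, hs, hl⟩ := exists_shortest_aux (normZ z) z rfl
  exact ⟨y, ⟨h0, hs, ⟨Fin.last _, hl⟩⟩, hl⟩

lemma one_le_Npath_norm (hd : 0 < d) (z : Fin d → ℤ) : 1 ≤ Npath d (normZ z) z := by
  obtain ⟨y, hy, -⟩ := exists_shortest z
  have hfin := pathsThrough_finite hd (n := normZ z) z
  have : 0 < (pathsThrough d (normZ z) z).ncard := (Set.ncard_pos hfin).mpr ⟨y, hy⟩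
  unfold Npath
  omega

lemma exists_B {n : ℕ} {z : Fin d → ℤ} {y : Fin (n + 1) → Fin d → ℤ}
    (hy : y ∈ pathsThrough d n z) :
    ∃ B : Finset (Fin n), B.card = normZ z ∧ ∑ i ∈ B, stepsOf y i = z := by
  classical
  obtain ⟨h0, hsteps, T, hT⟩ := hy
  set s := stepsOf y with hs
  set I := Finset.univ.filter (fun i : Fin n => (i : ℕ) < (T : ℕ)) with hIdef
  have hI : ∑ i ∈ I, s i = z := by
    rw [← partial_sum h0 T, hT]
  have hsteps' : ∀ i, normZ (s i) = 1 := hsteps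
  set sgn : Fin d → ℤ := fun j => if 0 ≤ z j then 1 else -1 with hsgn
  have hcard : ∀ j, (z j).natAbs ≤ (I.filter (fun i => s i j = sgn j)).card := by
    intro j
    have hzj : z j = ∑ i ∈ I, s i j := by
      rw [← hI]; exact (Finset.sum_apply j I s)
    have hbound : (if 0 ≤ z j then z j else -z j) ≤ ∑ i ∈ I, (if s i j = sgn j then (1 : ℤ) else 0) := by
      by_cases h0j : 0 ≤ z j
      · rw [if_pos h0j, hzj]
        apply Finset.sum_le_sum
        intro i _
        have habs := unit_abs_le (hsteps' i) j
        rw [hsgn]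
        simp only [if_pos h0j]
        by_cases he : s i j = 1
        · rw [if_pos he, he]
        · rw [if_neg he]
          omega
      · rw [if_neg h0j]
        have : -z j = ∑ i ∈ I, -(s i j) := by rw [hzj, Finset.sum_neg_distrib]
        rw [this]
        apply Finset.sum_le_sum
        intro i _
        have habs := unit_abs_le (hsteps' i) j
        rw [hsgn]
        simp only [if_neg h0j]
        by_cases he : s i j = -1
        · rw [if_pos he, he]; omega
        · rw [if_neg he]
          omega
    rw [Finset.sum_boole] at hbound
    by_cases h0j : 0 ≤ z j
    · rw [if_pos h0j] at hbound; omega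
    · rw [if_neg h0j] at hbound; omega
  set B : Fin d → Finset (Fin n) := fun j => (Finset.exists_subset_card_eq (hcard j)).choose
    with hB
  have hBsub : ∀ j, B j ⊆ I.filter (fun i => s i j = sgn j) :=
    fun j => (Finset.exists_subset_card_eq (hcard j)).choose_spec.1
  have hBcard : ∀ j, (B j).card = (z j).natAbs :=
    fun j => (Finset.exists_subset_card_eq (hcard j)).choose_spec.2
  have hmemP : ∀ j i, i ∈ B j → s i j = sgn j := by
    intro j i hi
    exact (Finset.mem_filter.mp (hBsub j hi)).2
  have hsgn_ne : ∀ j, sgn j ≠ 0 := by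
    intro j
    rw [hsgn]
    by_cases h0j : 0 ≤ z j <;> simp [h0j]
  have hdisj : ∀ j ∈ Finset.univ, ∀ j' ∈ Finset.univ, j ≠ j' →
      Disjoint (B j) (B j') := by
    intro j _ j' _ hne
    rw [Finset.disjoint_left]
    intro i hij hij'
    have h1 : s i j ≠ 0 := by rw [hmemP j i hij]; exact hsgn_ne j
    have h2 : s i j' ≠ 0 := by rw [hmemP j' i hij']; exact hsgn_ne j'
    exact hne (unit_eq_of_two_ne_zero (hsteps i) h1 h2)
  refine ⟨Finset.univ.biUnion B, ?_, ?_⟩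
  · rw [Finset.card_biUnion hdisj]
    simp only [hBcard]
    rfl
  · funext j'
    rw [Finset.sum_apply j' _ s, Finset.sum_biUnion hdisj]
    rw [Finset.sum_eq_single j']
    · have hconst : ∀ i ∈ B j', s i j' = sgn j' := fun i hi => hmemP j' i hi
      rw [Finset.sum_congr rfl hconst, Finset.sum_const, hBcard j']
      rw [hsgn]
      simp only []
      by_cases h0j : 0 ≤ z j'
      · rw [if_pos h0j, nsmul_eq_mul, mul_one]; omega
      · rw [if_neg h0j, nsmul_eq_mul, mul_neg_one]; omega
    · intro j _ hne
      apply Finset.sum_eq_zero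
      intro i hi
      by_contra hne0
      have h1 : s i j ≠ 0 := by rw [hmemP j i hi]; exact hsgn_ne j
      exact hne (unit_eq_of_two_ne_zero (hsteps i) h1 hne0)
    · intro h
      exact absurd (Finset.mem_univ j') h

def wOf {d n : ℕ} (m : ℕ) (y : Fin (n + 1) → Fin d → ℤ) (B : Finset (Fin n)) :
    Fin (m + 1) → Fin d → ℤ :=
  fun t => (((B.sort (· ≤ ·)).map (stepsOf y)).take t.val).sum

lemma wOf_length {n : ℕ} (y : Fin (n + 1) → Fin d → ℤ) (B : Finset (Fin n)) :
    ((B.sort (· ≤ ·)).map (stepsOf y)).length = B.card := by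
  rw [List.length_map, Finset.length_sort]

lemma wOf_step {n m : ℕ} (y : Fin (n + 1) → Fin d → ℤ) {B : Finset (Fin n)}
    (hB : B.card = m) (i : Fin m) :
    stepsOf (wOf m y B) i
      = ((B.sort (· ≤ ·)).map (stepsOf y))[i.val]'(by rw [wOf_length, hB]; exact i.isLt) := by
  have hp : i.val < ((B.sort (· ≤ ·)).map (stepsOf y)).length := by
    rw [wOf_length, hB]; exact i.isLt
  show wOf m y B i.succ - wOf m y B i.castSucc = _
  have h1 : (i.succ : ℕ) = i.val + 1 := rfl
  have h2 : ((i.castSucc : Fin (m + 1)) : ℕ) = i.val := rfl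
  unfold wOf
  rw [h1, h2, List.sum_take_succ _ _ hp]
  abel

lemma wOf_mem {n m : ℕ} {z : Fin d → ℤ} {y : Fin (n + 1) → Fin d → ℤ} {B : Finset (Fin n)}
    (hB : B.card = m) (hnorm : ∀ i ∈ B, normZ (stepsOf y i) = 1)
    (hsum : ∑ i ∈ B, stepsOf y i = z) :
    wOf m y B ∈ pathsThrough d m z := by
  refine ⟨?_, ?_, ⟨Fin.last m, ?_⟩⟩
  · show (((B.sort (· ≤ ·)).map (stepsOf y)).take (0 : Fin (m + 1)).val).sum = 0
    simp
  · intro i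
    have := wOf_step y hB i
    show normZ (stepsOf (wOf m y B) i) = 1
    rw [this]
    have hp : i.val < ((B.sort (· ≤ ·)).map (stepsOf y)).length := by
      rw [wOf_length, hB]; exact i.isLt
    have hmem : ((B.sort (· ≤ ·)).map (stepsOf y))[i.val] ∈
        ((B.sort (· ≤ ·)).map (stepsOf y)) := List.getElem_mem hp
    obtain ⟨a, ha, hae⟩ := List.mem_map.mp hmem
    rw [← hae]
    exact hnorm a (Finset.mem_sort (· ≤ ·) |>.mp ha)
  · show (((B.sort (· ≤ ·)).map (stepsOf y)).take (Fin.last m).val).sum = z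
    have hlen : ((B.sort (· ≤ ·)).map (stepsOf y)).length = m := by rw [wOf_length, hB]
    have : (Fin.last m).val = ((B.sort (· ≤ ·)).map (stepsOf y)).length := by
      rw [hlen]; rfl
    rw [this, List.take_length]
    have hperm : List.Perm ((B.sort (· ≤ ·)).map (stepsOf y)) (B.toList.map (stepsOf y)) :=
      (Finset.sort_perm_toList _ _).map _
    rw [hperm.sum_eq, Finset.sum_map_toList]
    exact hsum

lemma wOf_inj {n m : ℕ} {y y' : Fin (n + 1) → Fin d → ℤ} {B : Finset (Fin n)}
    (hB : B.card = m) (h : wOf m y B = wOf m y' B) :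
    ∀ i ∈ B, stepsOf y i = stepsOf y' i := by
  intro i hi
  have hmem : i ∈ B.sort (· ≤ ·) := Finset.mem_sort (· ≤ ·) |>.mpr hi
  obtain ⟨r, hget⟩ := List.mem_iff_get.mp hmem
  have hr : r.val < m := by
    have h1 := r.isLt
    have h2 : (B.sort (· ≤ ·)).length = m := by rw [Finset.length_sort, hB]
    omega
  have hstep : stepsOf (wOf m y B) ⟨r.val, hr⟩ = stepsOf (wOf m y' B) ⟨r.val, hr⟩ := by
    rw [h]
  rw [wOf_step y hB, wOf_step y' hB] at hstep
  have hp : r.val < (B.sort (· ≤ ·)).length := r.isLt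
  rw [List.getElem_map, List.getElem_map] at hstep
  have hgi : (B.sort (· ≤ ·))[r.val] = i := hget
  rwa [hgi] at hstep

def GSet (d n k : ℕ) : Set (Fin n → Fin d → ℤ) :=
  {g | ∃ A : Finset (Fin n), A.card = k ∧ (∀ i ∈ A, normZ (g i) = 1) ∧ ∀ i ∉ A, g i = 0}

lemma GSet_supp {n k : ℕ} {g : Fin n → Fin d → ℤ} (hg : g ∈ GSet d n k) :
    (Finset.univ.filter (fun i => g i ≠ 0)).card = k
      ∧ (∀ i, g i ≠ 0 → normZ (g i) = 1) := by
  classical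
  obtain ⟨A, hA, h1, h2⟩ := hg
  have hAeq : Finset.univ.filter (fun i => g i ≠ 0) = A := by
    ext i
    simp only [Finset.mem_filter, Finset.mem_univ, true_and]
    constructor
    · intro h
      by_contra hc
      exact h (h2 i hc)
    · intro h
      exact unit_ne_zero (h1 i h)
  constructor
  · rw [hAeq]; exact hA
  · intro i hne
    apply h1
    rw [← hAeq]
    simp only [Finset.mem_filter, Finset.mem_univ, true_and]
    exact hne

lemma ncard_prod {α β : Type*} (s : Set α) (t : Set β) :
    (s ×ˢ t).ncard = s.ncard * t.ncard := by
  rw [← Nat.card_coe_set_eq, Nat.card_congr (Equiv.Set.prod s t), Nat.card_prod,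
    Nat.card_coe_set_eq, Nat.card_coe_set_eq]

lemma GSet_count (hd : 0 < d) {n : ℕ} (hn : 0 < n) (k : ℕ) :
    (GSet d n k).Finite ∧ (GSet d n k).ncard ≤ n.choose k * (2 * d) ^ k := by
  classical
  set F : (Fin n → Fin d → ℤ) → (Finset (Fin n)) × (Fin k → Fin d × Bool) :=
    fun g => (Finset.univ.filter (fun i => g i ≠ 0),
      fun l => encStep hd (g ((Finset.univ.filter (fun i => g i ≠ 0)).sort (· ≤ ·)
        |>.getD l.val ⟨0, hn⟩))) with hF
  have hinj : Set.InjOn F (GSet d n k) := by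
    intro g hg g' hg' heq
    have hA : Finset.univ.filter (fun i => g i ≠ 0) = Finset.univ.filter (fun i => g' i ≠ 0) :=
      congrArg Prod.fst heq
    funext i
    by_cases h0 : g i = 0
    · have : i ∉ Finset.univ.filter (fun i => g' i ≠ 0) := by
        rw [← hA]
        simp [h0]
      simp only [Finset.mem_filter, Finset.mem_univ, true_and, not_not] at this
      rw [h0, this]
    · have hiA : i ∈ Finset.univ.filter (fun i => g i ≠ 0) := by simp [h0]
      have hmem : i ∈ (Finset.univ.filter (fun i => g i ≠ 0)).sort (· ≤ ·) :=
        Finset.mem_sort (· ≤ ·) |>.mpr hiA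
      obtain ⟨r, hget⟩ := List.mem_iff_get.mp hmem
      have hrk : r.val < k := by
        have h1 := r.isLt
        have h2 : ((Finset.univ.filter (fun i => g i ≠ 0)).sort (· ≤ ·)).length = k := by
          rw [Finset.length_sort, (GSet_supp hg).1]
        omega
      have h2 := congrFun (congrArg Prod.snd heq) ⟨r.val, hrk⟩
      simp only [hF] at h2
      have hgetD : ((Finset.univ.filter (fun i => g i ≠ 0)).sort (· ≤ ·)).getD r.val ⟨0, hn⟩
          = i := by
        rw [List.getD_eq_getElem _ _ r.isLt]
        exact hget
      rw [hgetD, ← hA, hgetD] at h2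
      have hn1 : normZ (g i) = 1 := (GSet_supp hg).2 i h0
      have hn2 : normZ (g' i) = 1 := by
        apply (GSet_supp hg').2 i
        have : i ∈ Finset.univ.filter (fun i => g' i ≠ 0) := by rw [← hA]; exact hiA
        simpa using this
      rw [← dec_encStep hd hn1, ← dec_encStep hd hn2, h2]
  have hmaps : Set.MapsTo F (GSet d n k)
      ({A : Finset (Fin n) | A.card = k} ×ˢ (Set.univ : Set (Fin k → Fin d × Bool))) := by
    intro g hg
    exact ⟨(GSet_supp hg).1, Set.mem_univ _⟩
  have htfin : ({A : Finset (Fin n) | A.card = k} ×ˢ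
      (Set.univ : Set (Fin k → Fin d × Bool))).Finite := Set.toFinite _
  constructor
  · exact Set.Finite.of_finite_image (Set.Finite.subset (Set.toFinite _) (Set.image_subset_range _ _)) hinj
  · calc (GSet d n k).ncard ≤ ({A : Finset (Fin n) | A.card = k} ×ˢ
        (Set.univ : Set (Fin k → Fin d × Bool))).ncard :=
          Set.ncard_le_ncard_of_injOn F hmaps hinj htfin
    _ = n.choose k * (2 * d) ^ k := by
        rw [ncard_prod]
        congr 1
        · have hset : {A : Finset (Fin n) | A.card = k}
              = ↑(Finset.univ.powersetCard k (α := Fin n)) := by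
            ext A
            simp [Finset.mem_powersetCard_univ]
          rw [hset, Set.ncard_coe_finset, Finset.card_powersetCard, Finset.card_univ,
            Fintype.card_fin]
        · rw [Set.ncard_univ, Nat.card_eq_fintype_card, Fintype.card_fun,
            Fintype.card_prod, Fintype.card_fin, Fintype.card_bool, Fintype.card_fin]
          ring

lemma Npath_le (hd : 0 < d) (z : Fin d → ℤ) {n : ℕ} (hmn : normZ z ≤ n) :
    Npath d n z ≤ Npath d (normZ z) z
      * (n.choose (n - normZ z) * (2 * d) ^ (n - normZ z)) := by
  classical
  rcases Nat.eq_zero_or_pos n with rfl | hn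
  · have hm : normZ z = 0 := Nat.le_zero.mp hmn
    rw [hm]
    simp
  set m := normZ z with hmdef
  set k := n - m with hkdef
  set Bf : (Fin (n + 1) → Fin d → ℤ) → Finset (Fin n) :=
    fun y => if h : y ∈ pathsThrough d n z then (exists_B h).choose else ∅ with hBfdef
  have hBf : ∀ y (h : y ∈ pathsThrough d n z),
      (Bf y).card = m ∧ ∑ i ∈ Bf y, stepsOf y i = z := by
    intro y h
    rw [hBfdef]
    simp only [dif_pos h]
    exact (exists_B h).choose_spec
  set F : (Fin (n + 1) → Fin d → ℤ) → (Fin (m + 1) → Fin d → ℤ) × (Fin n → Fin d → ℤ) :=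
    fun y => (wOf m y (Bf y), fun i => if i ∈ Bf y then 0 else stepsOf y i) with hFdef
  have hmaps : Set.MapsTo F (pathsThrough d n z) (pathsThrough d m z ×ˢ GSet d n k) := by
    intro y hy
    refine ⟨wOf_mem (hBf y hy).1 (fun i _ => hy.2.1 i) (hBf y hy).2, ?_⟩
    refine ⟨(Bf y)ᶜ, ?_, ?_, ?_⟩
    · rw [Finset.card_compl, (hBf y hy).1, Fintype.card_fin]
    · intro i hi
      have hni : i ∉ Bf y := Finset.mem_compl.mp hi
      show normZ (if i ∈ Bf y then 0 else stepsOf y i) = 1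
      rw [if_neg hni]
      exact hy.2.1 i
    · intro i hi
      have hii : i ∈ Bf y := by
        by_contra hc
        exact hi (Finset.mem_compl.mpr hc)
      show (if i ∈ Bf y then 0 else stepsOf y i) = 0
      rw [if_pos hii]
  have hinj : Set.InjOn F (pathsThrough d n z) := by
    intro y hy y' hy' heq
    have hsnd : ∀ i, (if i ∈ Bf y then 0 else stepsOf y i)
        = (if i ∈ Bf y' then 0 else stepsOf y' i) :=
      fun i => congrFun (congrArg Prod.snd heq) i
    have hBB : Bf y = Bf y' := by
      ext i
      have hiy : i ∈ Bf y ↔ (if i ∈ Bf y then (0 : Fin d → ℤ) else stepsOf y i) = 0 := by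
        constructor
        · intro h; rw [if_pos h]
        · intro h
          by_contra hc
          rw [if_neg hc] at h
          exact unit_ne_zero (hy.2.1 i) h
      have hiy' : i ∈ Bf y' ↔ (if i ∈ Bf y' then (0 : Fin d → ℤ) else stepsOf y' i) = 0 := by
        constructor
        · intro h; rw [if_pos h]
        · intro h
          by_contra hc
          rw [if_neg hc] at h
          exact unit_ne_zero (hy'.2.1 i) h
      rw [hiy, hiy', hsnd i]
    have hfst : wOf m y (Bf y) = wOf m y' (Bf y) := by
      have := congrArg Prod.fst heq
      simp only [hFdef] at this
      rw [hBB]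
      rw [hBB] at this
      exact this
    apply path_eq_of_steps_eq hy.1 hy'.1
    funext i
    by_cases hiB : i ∈ Bf y
    · exact wOf_inj (hBf y hy).1 hfst i hiB
    · have h1 := hsnd i
      rw [if_neg hiB, ← hBB, if_neg hiB] at h1
      exact h1
  have hGfin := (GSet_count hd hn k).1
  have hGcard := (GSet_count hd hn k).2
  have htfin : (pathsThrough d m z ×ˢ GSet d n k).Finite :=
    Set.Finite.prod (pathsThrough_finite hd z) hGfin
  calc Npath d n z ≤ (pathsThrough d m z ×ˢ GSet d n k).ncard :=
        Set.ncard_le_ncard_of_injOn F hmaps hinj htfin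
    _ = Npath d m z * (GSet d n k).ncard := by rw [ncard_prod]; rfl
    _ ≤ Npath d m z * (n.choose k * (2 * d) ^ k) :=
        Nat.mul_le_mul_left _ hGcard

theorem path_count_estimate
    (d : ℕ) (hd : 1 ≤ d) :
    ∃ K : ℝ, ∀ z : Fin d → ℤ, ∀ n : ℕ, normZ z < n →
      etaN d n z - eta z ≤
        ((n : ℝ) - normZ z) * Real.log (2 * d * Real.exp 1 * n / ((n : ℝ) - normZ z)) + K := by
  refine ⟨0, fun z n hmn => ?_⟩
  have hd0 : 0 < d := hd
  set m := normZ z with hm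
  set k := n - m with hk
  have hk1 : 1 ≤ k := by omega
  have hkn : k ≤ n := by omega
  have hn1 : 1 ≤ n := by omega
  have hcast : ((n : ℝ) - m) = (k : ℝ) := by
    rw [hk, Nat.cast_sub (le_of_lt hmn)]
  have hkpos : (0 : ℝ) < k := by exact_mod_cast hk1
  have hnpos : (0 : ℝ) < n := by exact_mod_cast hn1
  have hknR : (k : ℝ) ≤ n := by exact_mod_cast hkn
  have hDpos : (0 : ℝ) < 2 * d := by
    have : (0 : ℝ) < d := by exact_mod_cast hd0
    linarith
  have hD1 : (1 : ℝ) ≤ 2 * d := by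
    have : (1 : ℝ) ≤ d := by exact_mod_cast hd
    linarith
  have hexp1 : (1 : ℝ) ≤ Real.exp 1 := Real.one_le_exp (by norm_num)
  have hN0 : 1 ≤ Npath d m z := one_le_Npath_norm hd0 z
  have hN0R : (1 : ℝ) ≤ (Npath d m z : ℝ) := by exact_mod_cast hN0
  have hmain := Npath_le hd0 z (le_of_lt hmn)
  rw [add_zero]
  have hlogarg : Real.log (2 * d * Real.exp 1 * n / ((n : ℝ) - m))
      = Real.log (2 * d) + 1 + Real.log n - Real.log k := by
    rw [hcast, Real.log_div (by positivity) (ne_of_gt hkpos),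
      Real.log_mul (by positivity) (ne_of_gt hnpos),
      Real.log_mul (ne_of_gt hDpos) (Real.exp_ne_zero 1), Real.log_exp]
  have h2de : (1 : ℝ) ≤ 2 * d * Real.exp 1 := by nlinarith
  have harg1 : (1 : ℝ) ≤ 2 * d * Real.exp 1 * n / ((n : ℝ) - m) := by
    rw [hcast, le_div_iff₀ hkpos, one_mul]
    calc (k : ℝ) ≤ n := hknR
      _ = 1 * n := (one_mul _).symm
      _ ≤ 2 * d * Real.exp 1 * n := mul_le_mul_of_nonneg_right h2de (le_of_lt hnpos)
  show Real.log (Npath d n z) - Real.log (Npath d m z) ≤ _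
  rcases Nat.eq_zero_or_pos (Npath d n z) with h0 | hpos
  · rw [h0]
    push_cast
    rw [Real.log_zero]
    have h1 : 0 ≤ Real.log (Npath d m z) := Real.log_nonneg hN0R
    have h2 : 0 ≤ ((n : ℝ) - m) * Real.log (2 * d * Real.exp 1 * n / ((n : ℝ) - m)) := by
      apply mul_nonneg
      · rw [hcast]; exact le_of_lt hkpos
      · exact Real.log_nonneg harg1
    linarith
  · have hposR : (1 : ℝ) ≤ (Npath d n z : ℝ) := by exact_mod_cast hpos
    have hchoosepos : 0 < n.choose k := Nat.choose_pos hkn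
    have hchoose1 : (1 : ℝ) ≤ (n.choose k : ℝ) := by exact_mod_cast hchoosepos
    have hfact1 : (1 : ℝ) ≤ (k.factorial : ℝ) := by exact_mod_cast k.factorial_pos
    have hstep1 : Real.log (Npath d n z) ≤ Real.log (Npath d m z)
        + Real.log (n.choose k) + (k : ℝ) * Real.log (2 * d) := by
      have hle : (Npath d n z : ℝ) ≤ (Npath d m z : ℝ) * ((n.choose k : ℝ) * (2 * d : ℝ) ^ k) := by
        rw [← hm, ← hk] at hmain
        exact_mod_cast hmain
      calc Real.log (Npath d n z)
          ≤ Real.log ((Npath d m z : ℝ) * ((n.choose k : ℝ) * (2 * d : ℝ) ^ k)) :=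
            Real.log_le_log (by exact_mod_cast Nat.lt_of_lt_of_le Nat.zero_lt_one hpos) hle
        _ = Real.log (Npath d m z) + Real.log (n.choose k) + (k : ℝ) * Real.log (2 * d) := by
            rw [Real.log_mul (by linarith) (by positivity),
              Real.log_mul (by linarith) (by positivity), Real.log_pow]
            ring
    have hfactle : (n.choose k : ℝ) * (k.factorial : ℝ) ≤ (n : ℝ) ^ k := by
      have h2 : k.factorial * n.choose k ≤ n ^ k := by
        rw [← Nat.descFactorial_eq_factorial_mul_choose]
        exact Nat.descFactorial_le_pow n k
      rw [mul_comm]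
      exact_mod_cast h2
    have hstep2 : Real.log (n.choose k) ≤ (k : ℝ) * Real.log n - Real.log (k.factorial) := by
      have h3 := Real.log_le_log (by positivity) hfactle
      rw [Real.log_mul (by linarith) (by linarith), Real.log_pow] at h3
      linarith
    have hstep3 : (k : ℝ) * Real.log k ≤ Real.log (k.factorial) + k := by
      have hpow : (k : ℝ) ^ k ≤ (k.factorial : ℝ) * Real.exp k := by
        have hsum := Real.sum_le_exp_of_nonneg (x := (k : ℝ)) (le_of_lt hkpos) (k + 1)
        have hterm : (k : ℝ) ^ k / k.factorial
            ≤ ∑ i ∈ Finset.range (k + 1), (k : ℝ) ^ i / i.factorial :=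
          Finset.single_le_sum (f := fun i => (k : ℝ) ^ i / i.factorial)
            (fun i _ => by positivity) (Finset.self_mem_range_succ k)
        have h4 := le_trans hterm hsum
        rw [div_le_iff₀ (by linarith)] at h4
        rw [mul_comm] at h4
        exact h4
      have h5 := Real.log_le_log (by positivity) hpow
      rw [Real.log_pow, Real.log_mul (by linarith) (Real.exp_ne_zero _), Real.log_exp] at h5
      exact h5
    rw [hlogarg, hcast]
    have hexpand : (k : ℝ) * (Real.log (2 * d) + 1 + Real.log n - Real.log k)
        = (k : ℝ) * Real.log (2 * d) + k + (k : ℝ) * Real.log n - (k : ℝ) * Real.log k := by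
      ring
    rw [hexpand]
    linarith

end PAM
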